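/- arXiv:2209.06909 — 3 statements merged into one kernel-verified Lean document; each statement's English description precedes it below -/
import Mathlib

section
/- Let k = 2^m for a natural number m ≥ 1, and let 0 ≤ a < b ≤ 1 be reals. Define P^(2) = min { p : ⌊a·2^p⌋ < ⌊b·2^p⌋ } and P^(k) = min { p : ⌊a·k^p⌋ < ⌊b·k^p⌋ }. Then P^(k) = ⌈P^(2)/m⌉. -/
/-!
The set of exponents `p` with `⌊a c^p⌋ < ⌊b c^p⌋` is nonempty (once `(b - a) c^p ≥ 1`) and, for a
natural base `c`, upward closed: an integer in `(a c^p, b c^p]` scales to an integer in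
`(a c^q, b c^q]`. So in base 2 it is `[P, ∞)` with `P = P^(2)`, and since `(2^m)^p = 2^(m p)`,
in base `2^m` it is `{p | P ≤ m p} = [⌈P / m⌉, ∞)`.
-/

open Set

section FloorGap

variable {α : Type*} [Field α] [LinearOrder α] [IsStrictOrderedRing α] [FloorRing α]

theorem floor_lt_floor_of_add_one_le {x y : α} (h : x + 1 ≤ y) : ⌊x⌋ < ⌊y⌋ := by
  calc ⌊x⌋ < ⌊x⌋ + 1 := lt_add_one _
    _ = ⌊x + 1⌋ := (Int.floor_add_one x).symm
    _ ≤ ⌊y⌋ := Int.floor_mono h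

theorem floor_mul_natCast_lt_floor_mul_natCast {x y : α} (h : ⌊x⌋ < ⌊y⌋) {n : ℕ} (hn : 0 < n) :
    ⌊x * n⌋ < ⌊y * n⌋ := by
  have hx : x < ⌊y⌋ := Int.floor_lt.mp h
  have hn' : (0 : α) < n := by exact_mod_cast hn
  calc ⌊x * n⌋ < ⌊y⌋ * n := Int.floor_lt.mpr (by push_cast; gcongr)
    _ ≤ ⌊y * n⌋ := Int.le_floor.mpr (by push_cast; gcongr; exact Int.floor_le y)

end FloorGap

def floorSeparatingExponents (a b c : ℝ) : Set ℕ :=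
  {p | ⌊a * c ^ p⌋ < ⌊b * c ^ p⌋}

theorem mem_floorSeparatingExponents {a b c : ℝ} {p : ℕ} :
    p ∈ floorSeparatingExponents a b c ↔ ⌊a * c ^ p⌋ < ⌊b * c ^ p⌋ :=
  Iff.rfl

section FloorSeparatingExponents

variable {a b : ℝ}

theorem floorSeparatingExponents_nonempty (hab : a < b) {c : ℝ} (hc : 1 < c) :
    (floorSeparatingExponents a b c).Nonempty := by
  obtain ⟨p, hp⟩ := pow_unbounded_of_one_lt (1 / (b - a)) hc
  refine ⟨p, floor_lt_floor_of_add_one_le ?_⟩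
  rw [div_lt_iff₀ (sub_pos.mpr hab)] at hp
  linarith

theorem mem_floorSeparatingExponents_of_le {c : ℕ} (hc : 0 < c) {p q : ℕ}
    (hp : p ∈ floorSeparatingExponents a b c) (hpq : p ≤ q) :
    q ∈ floorSeparatingExponents a b c := by
  obtain ⟨d, rfl⟩ := Nat.exists_eq_add_of_le hpq
  have key := floor_mul_natCast_lt_floor_mul_natCast hp (pow_pos hc d)
  simpa only [mem_floorSeparatingExponents, pow_add, Nat.cast_pow, mul_assoc] using key

theorem mem_floorSeparatingExponents_pow_iff (hab : a < b) {c : ℕ} (hc : 1 < c) (m p : ℕ) :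
    p ∈ floorSeparatingExponents a b ((c : ℝ) ^ m) ↔
      sInf (floorSeparatingExponents a b c) ≤ m * p := by
  have hc' : (1 : ℝ) < c := by exact_mod_cast hc
  rw [mem_floorSeparatingExponents, ← pow_mul, ← mem_floorSeparatingExponents]
  refine ⟨fun h ↦ Nat.sInf_le h, fun h ↦ ?_⟩
  exact mem_floorSeparatingExponents_of_le (zero_lt_one.trans hc)
    (Nat.sInf_mem (floorSeparatingExponents_nonempty hab hc')) h

end FloorSeparatingExponents

theorem stmt_8_general (m : ℕ) (hm : 1 ≤ m) (k : ℕ) (hkm : k = 2 ^ m)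
    (a b : ℝ) (hab : a < b)
    (P2 Pk : ℕ)
    (hP2 : P2 = sInf {p : ℕ | ⌊a * (2 : ℝ) ^ p⌋ < ⌊b * (2 : ℝ) ^ p⌋})
    (hPk : Pk = sInf {p : ℕ | ⌊a * (k : ℝ) ^ p⌋ < ⌊b * (k : ℝ) ^ p⌋}) :
    (Pk : ℤ) = ⌈(P2 : ℚ) / (m : ℚ)⌉ := by
  change P2 = sInf (floorSeparatingExponents a b 2) at hP2
  change Pk = sInf (floorSeparatingExponents a b k) at hPk
  have hm' : (0 : ℚ) < m := by exact_mod_cast hm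
  have hSk : floorSeparatingExponents a b k = Ici ⌈(P2 : ℚ) / m⌉₊ := by
    ext p
    have h2 : p ∈ floorSeparatingExponents a b (2 ^ m) ↔ P2 ≤ m * p := by
      rw [hP2]
      exact_mod_cast mem_floorSeparatingExponents_pow_iff hab one_lt_two m p
    rw [mem_Ici, Nat.ceil_le, div_le_iff₀ hm', hkm, Nat.cast_pow, Nat.cast_ofNat, h2, mul_comm]
    exact_mod_cast Iff.rfl
  rw [hPk, hSk, csInf_Ici, Int.natCast_ceil_eq_ceil (by positivity)]

theorem stmt_8 (m : ℕ) (hm : 1 ≤ m) (k : ℕ) (hkm : k = 2 ^ m)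
    (a b : ℝ) (ha : 0 ≤ a) (hab : a < b) (hb : b ≤ 1)
    (P2 Pk : ℕ)
    (hP2 : P2 = sInf {p : ℕ | ⌊a * (2 : ℝ) ^ p⌋ < ⌊b * (2 : ℝ) ^ p⌋})
    (hPk : Pk = sInf {p : ℕ | ⌊a * (k : ℝ) ^ p⌋ < ⌊b * (k : ℝ) ^ p⌋}) :
    (Pk : ℤ) = ⌈(P2 : ℚ) / (m : ℚ)⌉ :=
  stmt_8_general m hm k hkm a b hab P2 Pk hP2 hPk
end

section
/- With the midpoint intervals (a_i, b_i] as above and k ≥ 2, p ≥ 1 fixed: the number of indices i ∈ {1,…,r−1} whose boundary power equals p, and whose assigned grid point c·k^(−p) lies within any single interval of the form [m·k^{−(p−1)}, (m+1)·k^{−(p−1)}) for m ∈ ℕ, is at most k−1. -/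
open scoped Classical

/-! Consecutive midpoint intervals only touch, so the chosen points `c i · k^(-p)` are strictly
increasing in `i` and `c` is injective. Inside one coarse cell `[m k^(1-p), (m+1) k^(1-p))` the
fine grid has the `k` points `(m k + t) k^(-p)`, `t < k`, and minimality of `p` rules out the
coarse point `t = 0`, leaving at most `k - 1` values for `c i`. -/

lemma half_add_half_le_sum_Ico {ℓ : ℕ → ℝ} {i j : ℕ} (hij : i < j)
    (hℓ : ∀ t ∈ Finset.Ico i j, 0 ≤ ℓ t) :
    ℓ i / 2 + ℓ (j - 1) / 2 ≤ ∑ t ∈ Finset.Ico i j, ℓ t := by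
  have hi : 0 ≤ ℓ i := hℓ i (by simp [hij])
  rcases eq_or_ne i (j - 1) with hlast | hlast
  · obtain rfl : j = i + 1 := by omega
    simp
  · have hj : 0 ≤ ℓ (j - 1) := hℓ (j - 1) (Finset.mem_Ico.2 ⟨by omega, by omega⟩)
    have hpair : ({i, j - 1} : Finset ℕ) ⊆ Finset.Ico i j := by
      intro t; simp only [Finset.mem_insert, Finset.mem_singleton, Finset.mem_Ico]; omega
    have := Finset.sum_le_sum_of_subset_of_nonneg hpair fun t ht _ => hℓ t ht
    rw [Finset.sum_pair hlast] at this
    linarith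

lemma sum_range_add_half_le_sum_range_sub_half {ℓ : ℕ → ℝ} {i j : ℕ} (hij : i < j)
    (hℓ : ∀ t ∈ Finset.Ico i j, 0 ≤ ℓ t) :
    (∑ t ∈ Finset.range i, ℓ t) + ℓ i / 2 ≤ (∑ t ∈ Finset.range j, ℓ t) - ℓ (j - 1) / 2 := by
  rw [← Finset.sum_range_add_sum_Ico _ hij.le]
  linarith [half_add_half_le_sum_Ico hij hℓ]

lemma strictMonoOn_of_mem_Ioc {ι α : Type*} [Preorder ι] [Preorder α] {s : Set ι}
    {f a b : ι → α} (hf : ∀ i ∈ s, f i ∈ Set.Ioc (a i) (b i))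
    (hab : ∀ i ∈ s, ∀ j ∈ s, i < j → b i ≤ a j) : StrictMonoOn f s :=
  fun i hi j hj hij => (hf i hi).2.trans_lt ((hab i hi j hj hij).trans_lt (hf j hj).1)

lemma natCast_mul_mem_Ico_iff {x : ℝ} (hx : 0 < x) (n m k : ℕ) :
    (n : ℝ) * x ∈ Set.Ico (m * (x * k)) ((m + 1) * (x * k)) ↔
      n ∈ Finset.Ico (m * k) (m * k + k) := by
  have hlo : (m : ℝ) * (x * k) = ((m * k : ℕ) : ℝ) * x := by push_cast; ring
  have hhi : ((m : ℝ) + 1) * (x * k) = ((m * k + k : ℕ) : ℝ) * x := by push_cast; ring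
  rw [Set.mem_Ico, Finset.mem_Ico, hlo, hhi, mul_le_mul_iff_left₀ hx,
    mul_lt_mul_iff_left₀ hx]
  norm_cast

theorem stmt_15_general (r k p : ℕ) (hk : 2 ≤ k) (ℓ : ℕ → ℝ)
    (hpos : ∀ j < r, 0 < ℓ j)
    (a b : ℕ → ℝ)
    (ha : ∀ i, a i = (∑ j ∈ Finset.range i, ℓ j) - ℓ (i - 1) / 2)
    (hb : ∀ i, b i = (∑ j ∈ Finset.range i, ℓ j) + ℓ i / 2)
    (c : ℕ → ℕ)
    (hc : ∀ i ∈ Finset.Ico 1 r,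
      (c i : ℝ) * (k : ℝ) ^ (-(p : ℤ)) ∈ Set.Ioc (a i) (b i))
    (hmin : ∀ i ∈ Finset.Ico 1 r, ∀ c' : ℕ,
      (c' : ℝ) * (k : ℝ) ^ (-(p : ℤ) + 1) ∉ Set.Ioc (a i) (b i))
    (m : ℕ) :
    ((Finset.Ico 1 r).filter (fun i =>
        (c i : ℝ) * (k : ℝ) ^ (-(p : ℤ)) ∈
          Set.Ico ((m : ℝ) * (k : ℝ) ^ (-(p : ℤ) + 1))
                  (((m : ℝ) + 1) * (k : ℝ) ^ (-(p : ℤ) + 1)))).card ≤ k - 1 := by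
  have hk0 : (0 : ℝ) < k := by positivity
  have hx : (0 : ℝ) < (k : ℝ) ^ (-(p : ℤ)) := zpow_pos hk0 _
  have hsplit : (k : ℝ) ^ (-(p : ℤ) + 1) = (k : ℝ) ^ (-(p : ℤ)) * k := by
    rw [zpow_add₀ hk0.ne', zpow_one]
  simp only [hsplit] at hmin ⊢
  have hmono : StrictMonoOn (fun i => (c i : ℝ) * (k : ℝ) ^ (-(p : ℤ))) ↑(Finset.Ico 1 r) := by
    refine strictMonoOn_of_mem_Ioc hc fun i hi j hj hij => ?_
    simp only [Finset.coe_Ico, Set.mem_Ico] at hi hj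
    rw [ha, hb]
    exact sum_range_add_half_le_sum_range_sub_half hij fun t ht =>
      (hpos t (by rw [Finset.mem_Ico] at ht; omega)).le
  calc _ ≤ (Finset.Ico (m * k + 1) (m * k + k)).card := by
        refine Finset.card_le_card_of_injOn c (fun i hi => ?_)
          (Set.InjOn.of_comp (g := fun n : ℕ => (n : ℝ) * (k : ℝ) ^ (-(p : ℤ)))
          (hmono.injOn.mono (Finset.coe_subset.2 (Finset.filter_subset _ _))))
        simp only [Finset.coe_filter, Set.mem_ofPred_eq] at hi
        have hgrid := (natCast_mul_mem_Ico_iff hx (c i) m k).1 hi.2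
        have hne : c i ≠ m * k := fun heq => hmin i hi.1 m (by
          convert hc i hi.1 using 1; rw [heq]; push_cast; ring)
        simp only [Finset.coe_Ico, Set.mem_Ico, Finset.mem_Ico] at hgrid ⊢
        omega
    _ = k - 1 := by rw [Nat.card_Ico]; omega

theorem stmt_15 (r k p : ℕ) (hk : 2 ≤ k) (hp : 1 ≤ p) (ℓ : ℕ → ℝ)
    (hpos : ∀ j < r, 0 < ℓ j) (hsum : ∑ j ∈ Finset.range r, ℓ j = 1)
    (a b : ℕ → ℝ)
    (ha : ∀ i, a i = (∑ j ∈ Finset.range i, ℓ j) - ℓ (i - 1) / 2)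
    (hb : ∀ i, b i = (∑ j ∈ Finset.range i, ℓ j) + ℓ i / 2)
    (c : ℕ → ℕ)
    (hc : ∀ i ∈ Finset.Ico 1 r,
      (c i : ℝ) * (k : ℝ) ^ (-(p : ℤ)) ∈ Set.Ioc (a i) (b i))
    (hmin : ∀ i ∈ Finset.Ico 1 r, ∀ c' : ℕ,
      (c' : ℝ) * (k : ℝ) ^ (-(p : ℤ) + 1) ∉ Set.Ioc (a i) (b i))
    (m : ℕ) :
    ((Finset.Ico 1 r).filter (fun i =>
        (c i : ℝ) * (k : ℝ) ^ (-(p : ℤ)) ∈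
          Set.Ico ((m : ℝ) * (k : ℝ) ^ (-(p : ℤ) + 1))
                  (((m : ℝ) + 1) * (k : ℝ) ^ (-(p : ℤ) + 1)))).card ≤ k - 1 :=
  stmt_15_general r k p hk ℓ hpos a b ha hb c hc hmin m
end

section
/- Let ℓ_0, …, ℓ_{r−1} be positive reals summing to 1 and k ≥ 2. Define boundary powers P_1, …, P_{r−1} by P_i = min { p ∈ ℕ : ⌊a_i k^p⌋ < ⌊b_i k^p⌋ } with a_i, b_i the midpoint interval endpoints, and set P_0 = P_r = 0. Then Σ_{i=0}^{r−1} ℓ_i · max(P_i, P_{i+1}) ≤ Σ_{i=0}^{r−1} ℓ_i · (⌈log_k(1/ℓ_i)⌉ + 1). -/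
lemma pow_helper (k : ℕ) (hk : 2 ≤ k) (x ab : ℝ) (hx : 0 < x) (hx1 : x ≤ 1)
    (hab : x / 2 ≤ ab) :
    ∃ N : ℕ, (N : ℝ) ≤ (⌈Real.logb k (1 / x)⌉ : ℝ) + 1 ∧ 1 ≤ ab * (k : ℝ) ^ N := by
  have hk1 : (1 : ℝ) < (k : ℝ) := by exact_mod_cast hk.trans_lt' one_lt_two |>.trans_le le_rfl
  have hk2 : (2 : ℝ) ≤ (k : ℝ) := by exact_mod_cast hk
  have hlog0 : 0 ≤ Real.logb k (1 / x) :=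
    Real.logb_nonneg hk1 (by rw [le_div_iff₀ hx]; linarith)
  set c : ℕ := (⌈Real.logb k (1 / x)⌉).toNat with hc
  refine ⟨c + 1, ?_, ?_⟩
  · have hcc : ((⌈Real.logb k (1 / x)⌉).toNat : ℤ) = ⌈Real.logb k (1 / x)⌉ :=
      Int.toNat_of_nonneg (Int.ceil_nonneg hlog0)
    have hcr : (c : ℝ) = (⌈Real.logb k (1 / x)⌉ : ℝ) := by rw [hc]; exact_mod_cast hcc
    push_cast
    linarith [hcr.le]
  · have hcx : 1 / x ≤ (k : ℝ) ^ c := by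
      have h1 : Real.logb k (1 / x) ≤ (c : ℝ) := by
        rw [hc]
        calc Real.logb k (1 / x) ≤ (⌈Real.logb k (1 / x)⌉ : ℝ) := Int.le_ceil _
        _ ≤ _ := by exact_mod_cast Int.self_le_toNat _
      calc (1 / x) = (k : ℝ) ^ Real.logb k (1 / x) :=
            (Real.rpow_logb (by linarith) (by linarith) (by positivity)).symm
        _ ≤ (k : ℝ) ^ (c : ℝ) :=
            Real.rpow_le_rpow_of_exponent_le (le_of_lt hk1) h1
        _ = (k : ℝ) ^ c := Real.rpow_natCast _ _
    have : (2 / x) ≤ (k : ℝ) ^ (c + 1) := by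
      rw [pow_succ]
      calc 2 / x = 2 * (1 / x) := by ring
        _ ≤ (k : ℝ) ^ c * (k : ℝ) := by
          have h0 : (0:ℝ) < 1 / x := by positivity
          nlinarith [pow_pos (by linarith : (0:ℝ) < (k:ℝ)) c]
    have hpow : (0:ℝ) < (k : ℝ) ^ (c + 1) := pow_pos (by linarith) _
    have := mul_le_mul_of_nonneg_right hab (le_of_lt hpow)
    have h2x : x / 2 * (2 / x) = 1 := by field_simp
    nlinarith [mul_le_mul_of_nonneg_left this (le_refl (0:ℝ))]

theorem stmt_17 (r k : ℕ) (hr : 1 ≤ r) (hk : 2 ≤ k) (ℓ : ℕ → ℝ)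
    (hpos : ∀ j < r, 0 < ℓ j) (hsum : ∑ j ∈ Finset.range r, ℓ j = 1)
    (a b : ℕ → ℝ)
    (ha : ∀ i, a i = (∑ j ∈ Finset.range i, ℓ j) - ℓ (i - 1) / 2)
    (hb : ∀ i, b i = (∑ j ∈ Finset.range i, ℓ j) + ℓ i / 2)
    (P : ℕ → ℕ)
    (hP : ∀ i, 1 ≤ i → i < r →
      P i = sInf {p : ℕ | ⌊a i * (k : ℝ) ^ p⌋ < ⌊b i * (k : ℝ) ^ p⌋})
    (hP0 : P 0 = 0) (hPr : P r = 0) :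
    ∑ i ∈ Finset.range r, ℓ i * (max (P i) (P (i + 1)) : ℝ) ≤
      ∑ i ∈ Finset.range r, ℓ i * ((⌈Real.logb k (1 / ℓ i)⌉ : ℝ) + 1) := by
  have hk1 : (1 : ℝ) < (k : ℝ) := by exact_mod_cast lt_of_lt_of_le one_lt_two hk
  have hle1 : ∀ m, m < r → ℓ m ≤ 1 := by
    intro m hm
    rw [← hsum]
    exact Finset.single_le_sum (fun j hj => (hpos j (Finset.mem_range.mp hj)).le)
      (Finset.mem_range.mpr hm)
  -- key bound
  have key : ∀ j, 1 ≤ j → j < r → ∀ m, m < r → ℓ m / 2 ≤ b j - a j →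
      (P j : ℝ) ≤ (⌈Real.logb k (1 / ℓ m)⌉ : ℝ) + 1 := by
    intro j hj1 hjr m hmr hdiff
    obtain ⟨N, hN1, hN2⟩ := pow_helper k hk (ℓ m) (b j - a j) (hpos m hmr) (hle1 m hmr) hdiff
    have hPN : P j ≤ N := by
      rw [hP j hj1 hjr]
      apply Nat.sInf_le
      show ⌊a j * (k : ℝ) ^ N⌋ < ⌊b j * (k : ℝ) ^ N⌋
      have : a j * (k:ℝ)^N + 1 ≤ b j * (k:ℝ)^N := by nlinarith
      have h1 : (⌊a j * (k:ℝ)^N⌋ : ℝ) + 1 ≤ b j * (k:ℝ)^N :=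
        le_trans (by linarith [Int.floor_le (a j * (k:ℝ)^N)]) this
      have := Int.le_floor.mpr (by exact_mod_cast h1 :
        ((⌊a j * (k:ℝ)^N⌋ + 1 : ℤ) : ℝ) ≤ b j * (k:ℝ)^N)
      omega
    calc (P j : ℝ) ≤ (N : ℝ) := by exact_mod_cast hPN
      _ ≤ _ := hN1
  have hceil : ∀ m, m < r → (0:ℝ) ≤ (⌈Real.logb k (1 / ℓ m)⌉ : ℝ) + 1 := by
    intro m hm
    have : 0 ≤ Real.logb k (1 / ℓ m) :=
      Real.logb_nonneg hk1 (by rw [le_div_iff₀ (hpos m hm)]; linarith [hle1 m hm])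
    have := Int.ceil_nonneg this
    push_cast
    exact_mod_cast by linarith [(by exact_mod_cast this : (0:ℝ) ≤ (⌈Real.logb k (1 / ℓ m)⌉ : ℝ))]
  apply Finset.sum_le_sum
  intro i hi
  rw [Finset.mem_range] at hi
  apply mul_le_mul_of_nonneg_left _ (hpos i hi).le
  have hdiff : ∀ j, 1 ≤ j → b j - a j = ℓ (j-1) / 2 + ℓ j / 2 := by
    intro j hj; rw [ha, hb]; ring
  apply max_le
  · -- bound P i
    rcases Nat.eq_zero_or_pos i with h0 | h1
    · subst h0; rw [hP0]; simpa using hceil 0 hi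
    · apply key i h1 hi i hi
      rw [hdiff i h1]
      have : 0 < ℓ (i-1) := hpos _ (by omega)
      linarith
  · -- bound P (i+1)
    rcases eq_or_lt_of_le (Nat.succ_le_of_lt hi) with h0 | h1
    · rw [(by omega : i + 1 = r), hPr]; simpa using hceil i hi
    · apply key (i+1) (by omega) h1 i hi
      rw [hdiff (i+1) (by omega)]
      simp only [Nat.add_sub_cancel]
      have : 0 < ℓ (i+1) := hpos _ h1
      linarith
end
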